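/- arXiv:2403.02276 — 2 statements merged into one kernel-verified Lean document; each statement's English description precedes it below -/
import Mathlib

section
/- For each integer n ≥ 2, f_{n−2}(n) = n!/2. -/
/-!
Reversing the one-line notation, `σ ↦ σ * Fin.revPerm`, is an involution of `S_n` that moves
every permutation to Ulam distance at least `n - 1`: after deleting symbols, a string without
repetitions that equals its reverse has at most one letter. Hence a family of diameter at most
`n - 2` is disjoint from its reversal, and has at most `n!/2` members. Conversely, the `n!/2`
permutations in which `1` precedes `n` all become the string `1 n` after deleting the other
`n - 2` symbols.
-/

/-- The string (as a list) obtained from the one-line notation of `σ`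
by deleting all symbols in `A`. -/
def ulamDel {n : ℕ} (σ : Equiv.Perm (Fin n)) (A : Finset (Fin n)) : List (Fin n) :=
  (List.ofFn fun i => σ i).filter (fun x => decide (x ∉ A))

/-- The Ulam distance between two permutations: the least number of distinct
symbols that must be deleted from each until they are equal. -/
noncomputable def ulamDist {n : ℕ} (α β : Equiv.Perm (Fin n)) : ℕ :=
  sInf {m | ∃ A : Finset (Fin n), A.card = m ∧ ulamDel α A = ulamDel β A}

/-- `f_k(n)`: the maximum size of a set `F ⊆ S_n` such that `d_U(α, β) ≤ k`
for all `α, β ∈ F`. -/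
noncomputable def maxDiamFamily (n k : ℕ) : ℕ :=
  sSup {m | ∃ F : Finset (Equiv.Perm (Fin n)), F.card = m ∧
    ∀ α ∈ F, ∀ β ∈ F, ulamDist α β ≤ k}

open Finset Equiv
open scoped Nat

namespace List

theorem reverse_ofFn {α : Type*} {n : ℕ} (f : Fin n → α) :
    (ofFn f).reverse = ofFn fun i => f i.rev := by
  refine ext_getElem (by simp) fun i _ h => ?_
  simp only [getElem_reverse, List.getElem_ofFn, length_ofFn]
  congr 1
  ext
  simp only [length_ofFn] at h
  simp only [Fin.val_rev]
  omega

theorem length_le_one_of_reverse_eq {α : Type*} {l : List α} (hl : l.Nodup)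
    (h : l.reverse = l) : l.length ≤ 1 := by
  by_contra! hlen
  have hlast_eq_first : l[l.length - 1 - 0] = l[0] := by
    rw [← getElem_reverse]
    · simp only [h]
    · simp only [length_reverse]; omega
  have := hl.getElem_inj_iff.1 hlast_eq_first
  omega

theorem filter_finRange_eq_pair {n : ℕ} {i j : Fin n} (hij : i < j) :
    (finRange n).filter (fun k => decide (k = i ∨ k = j)) = [i, j] :=
  Pairwise.eq_of_mem_iff (r := (· < ·)) ((pairwise_lt_finRange n).sublist filter_sublist)
    (by simp [hij]) (by simp)

end List

theorem Equiv.Perm.two_mul_card_filter_symm_lt {α : Type*} [Fintype α] [LinearOrder α]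
    {a b : α} (hab : a ≠ b) :
    2 * #{σ : Perm α | σ.symm a < σ.symm b} = (Fintype.card α)! := by
  have hswap : ∀ σ : Perm α,
      (swap a b * σ).symm a = σ.symm b ∧ (swap a b * σ).symm b = σ.symm a :=
    fun σ => by simp [Perm.mul_def]
  have hflip : ∀ σ : Perm α, ¬ σ.symm a < σ.symm b ↔ σ.symm b < σ.symm a := fun σ =>
    not_lt.trans (lt_iff_le_and_ne.trans (and_iff_left (σ.symm.injective.ne hab.symm))).symm
  have hhalves :
      #{σ : Perm α | σ.symm a < σ.symm b} = #{σ : Perm α | ¬ σ.symm a < σ.symm b} := by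
    refine card_nbij' (swap a b * ·) (swap a b * ·) ?_ ?_ ?_ ?_ <;> intro σ hσ <;>
      simp_all [← mul_assoc]
  rw [← Fintype.card_perm, ← Finset.card_univ, ← card_filter_add_card_filter_not (s := univ)
    (fun σ : Perm α => σ.symm a < σ.symm b), ← hhalves, two_mul]

section Ulam

variable {n : ℕ}

theorem ulamDel_nodup (σ : Perm (Fin n)) (A : Finset (Fin n)) : (ulamDel σ A).Nodup :=
  (List.nodup_ofFn.2 σ.injective).filter _

theorem ulamDel_length (σ : Perm (Fin n)) (A : Finset (Fin n)) :
    (ulamDel σ A).length = n - #A := by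
  have hsupp : (ulamDel σ A).toFinset = Aᶜ := by
    ext x
    simpa [ulamDel] using fun _ => ⟨σ.symm x, by simp⟩
  rw [← List.toFinset_card_of_nodup (ulamDel_nodup σ A), hsupp, card_compl, Fintype.card_fin]

theorem ulamDel_mul_revPerm (σ : Perm (Fin n)) (A : Finset (Fin n)) :
    ulamDel (σ * Fin.revPerm) A = (ulamDel σ A).reverse := by
  rw [ulamDel, ulamDel, ← List.filter_reverse, List.reverse_ofFn]
  rfl

theorem ulamDel_compl_pair (σ : Perm (Fin n)) {a b : Fin n} (h : σ.symm a < σ.symm b) :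
    ulamDel σ {a, b}ᶜ = [a, b] := by
  have hpred : (fun x => decide (x ∉ ({a, b} : Finset (Fin n))ᶜ)) ∘ σ
      = fun i => decide (i = σ.symm a ∨ i = σ.symm b) := by
    funext i
    simp [eq_symm_apply]
  rw [ulamDel, List.ofFn_eq_map, List.filter_map, hpred, List.filter_finRange_eq_pair h]
  simp

theorem ulamDist_le_card {α β : Perm (Fin n)} {A : Finset (Fin n)}
    (h : ulamDel α A = ulamDel β A) : ulamDist α β ≤ #A :=
  Nat.sInf_le ⟨A, rfl, h⟩

theorem exists_card_eq_ulamDist (α β : Perm (Fin n)) :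
    ∃ A : Finset (Fin n), #A = ulamDist α β ∧ ulamDel α A = ulamDel β A :=
  Nat.sInf_mem (s := {m | ∃ A : Finset (Fin n), #A = m ∧ ulamDel α A = ulamDel β A})
    ⟨n, univ, by simp, by simp [ulamDel]⟩

theorem sub_one_le_ulamDist_mul_revPerm (σ : Perm (Fin n)) :
    n - 1 ≤ ulamDist σ (σ * Fin.revPerm) := by
  obtain ⟨A, hA, hdel⟩ := exists_card_eq_ulamDist σ (σ * Fin.revPerm)
  rw [ulamDel_mul_revPerm] at hdel
  have := List.length_le_one_of_reverse_eq (ulamDel_nodup σ A) hdel.symm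
  rw [ulamDel_length] at this
  omega

theorem ulamDist_le_sub_two {α β : Perm (Fin n)} {a b : Fin n}
    (hα : α.symm a < α.symm b) (hβ : β.symm a < β.symm b) : ulamDist α β ≤ n - 2 := by
  have hab : a ≠ b := by rintro rfl; exact hα.false
  calc ulamDist α β ≤ #({a, b}ᶜ : Finset (Fin n)) :=
        ulamDist_le_card (by rw [ulamDel_compl_pair α hα, ulamDel_compl_pair β hβ])
    _ = n - 2 := by rw [card_compl, card_pair hab, Fintype.card_fin]

theorem two_mul_card_le_of_ulamDist_lt {F : Finset (Perm (Fin n))}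
    (hF : ∀ α ∈ F, ∀ β ∈ F, ulamDist α β < n - 1) : 2 * #F ≤ n ! := by
  have hdisj : Disjoint F (F.image (· * Fin.revPerm)) := by
    refine disjoint_right.2 fun σ hσ hσF => ?_
    obtain ⟨τ, hτ, rfl⟩ := mem_image.1 hσ
    exact (hF τ hτ _ hσF).not_ge (sub_one_le_ulamDist_mul_revPerm τ)
  calc 2 * #F = #(F ∪ F.image (· * Fin.revPerm)) := by
        rw [card_union_of_disjoint hdisj, card_image_of_injective _ (mul_left_injective _), two_mul]
    _ ≤ Fintype.card (Perm (Fin n)) := card_le_univ _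
    _ = n ! := by rw [Fintype.card_perm, Fintype.card_fin]

theorem maxDiamFamily_le {k M : ℕ}
    (h : ∀ F : Finset (Perm (Fin n)), (∀ α ∈ F, ∀ β ∈ F, ulamDist α β ≤ k) → #F ≤ M) :
    maxDiamFamily n k ≤ M :=
  csSup_le ⟨0, ∅, by simp⟩ fun _ ⟨F, hcard, hF⟩ => hcard ▸ h F hF

theorem card_le_maxDiamFamily {k : ℕ} {F : Finset (Perm (Fin n))}
    (hF : ∀ α ∈ F, ∀ β ∈ F, ulamDist α β ≤ k) : #F ≤ maxDiamFamily n k :=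
  le_csSup ⟨Fintype.card (Perm (Fin n)), fun _ ⟨G, hcard, _⟩ => hcard ▸ card_le_univ G⟩
    ⟨F, rfl, hF⟩

end Ulam

/-- For each integer `n ≥ 2`, `f_{n−2}(n) = n!/2`. -/
theorem maxDiamFamily_n_sub_two (n : ℕ) (hn : 2 ≤ n) :
    maxDiamFamily n (n - 2) = n.factorial / 2 := by
  apply le_antisymm
  · refine maxDiamFamily_le fun F hF => ?_
    have := two_mul_card_le_of_ulamDist_lt fun α hα β hβ => (hF α hα β hβ).trans_lt
      (show n - 2 < n - 1 by omega)
    omega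
  · have hfirst_ne_last : (⟨0, by omega⟩ : Fin n) ≠ ⟨n - 1, by omega⟩ := by simp; omega
    have hhalf := Perm.two_mul_card_filter_symm_lt hfirst_ne_last
    rw [Fintype.card_fin] at hhalf
    calc n ! / 2 = #{σ : Perm (Fin n) | σ.symm ⟨0, _⟩ < σ.symm ⟨n - 1, _⟩} := by omega
      _ ≤ maxDiamFamily n (n - 2) := card_le_maxDiamFamily fun α hα β hβ =>
        ulamDist_le_sub_two (mem_filter.1 hα).2 (mem_filter.1 hβ).2
end

section
/- For each integer n ≥ 1, f_1(n) = n; that is, any family F ⊆ S_n with d_U(α, β) ≤ 1 for all α, β ∈ F has |F| ≤ n, and some such family of size n exists. -/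
/-!
Work with position functions `u = β⁻¹`. Then `d_U(β, γ) ≤ 1` says that all pairs of symbols
ordered differently by `β` and `γ` pass through one symbol, i.e. the set `discord u v` of such
pairs has a center. Discord sets compose by symmetric difference, and after relabelling the
symbols the family contains `1`, so each member `u` is described by its inversion set
`discord 1 u`, a star.

If all these stars have a common center `d`, a member `u` is determined by `u d`, so there are
at most `n` of them. The centers of an inversion set form an interval, so otherwise, by Helly's
theorem on a line, two members `u`, `v` have no common center. Comparing the stars, together
with the transitivity of inversions, then forces `discord 1 u = {ac, ab}` and
`discord 1 v = {bc, ba}` with `c` strictly between `a` and `b`, and leaves no room in the family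
for anything but `1`, `u`, `v`; so it has `3 ≤ n` members. Moving the symbol `0` to each of the
`n` positions gives a family of size `n`.
-/

open Equiv Finset
open scoped symmDiff

section Centers

variable {α : Type*} {E F W : Set (Sym2 α)} {a b c c₁ c₂ e : α}

def centers (E : Set (Sym2 α)) : Set α := {c | ∀ z ∈ E, c ∈ z}

lemma mem_centers_symmDiff (hE : a ∈ centers E) (hF : a ∈ centers F) :
    a ∈ centers (E ∆ F) := by
  intro z hz
  rcases Set.mem_symmDiff.1 hz with h | h
  exacts [hE z h.1, hF z h.1]

lemma mem_centers_of_symmDiff (hE : a ∈ centers E) (hEF : a ∈ centers (E ∆ F)) :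
    a ∈ centers F := by
  simpa using mem_centers_symmDiff hE hEF

lemma eq_pair_of_disjoint_centers (ha : a ∈ centers E) (hb : b ∈ centers F)
    (hc : c ∈ centers (E ∆ F)) (hdisj : Disjoint (centers E) (centers F)) :
    E = {s(a, c), s(a, b)} := by
  have hab : a ≠ b := fun h => Set.disjoint_left.1 hdisj ha (h ▸ hb)
  have hca : c ≠ a := by
    rintro rfl
    exact Set.disjoint_left.1 hdisj ha (mem_centers_of_symmDiff ha hc)
  have hsub : E ⊆ {s(a, c), s(a, b)} := by
    intro z hz
    obtain ⟨y, rfl⟩ := Sym2.mem_iff_exists.1 (ha z hz)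
    by_cases hzF : s(a, y) ∈ F
    · grind [hb _ hzF]
    · grind [hc _ (Set.mem_symmDiff.2 (Or.inl ⟨hz, hzF⟩))]
  refine hsub.antisymm (Set.insert_subset_iff.2 ⟨?_, Set.singleton_subset_iff.2 ?_⟩)
  · by_contra hacE
    have hbE : b ∈ centers E := fun z hz => by grind [hsub hz]
    exact Set.disjoint_left.1 hdisj hbE hb
  · by_contra habE
    have hcE : c ∈ centers E := fun z hz => by grind [hsub hz]
    exact Set.disjoint_left.1 hdisj hcE (mem_centers_of_symmDiff hcE hc)

lemma eq_of_mk_mem_of_mem_centers (hab : a ≠ b) (hac : a ≠ c) (hbc : b ≠ c)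
    (hW : s(a, b) ∈ W) (ha : a ∈ centers W)
    (hcotrans : s(a, b) ∈ W → s(a, c) ∈ W ∨ s(c, b) ∈ W)
    (h₂ : c₂ ∈ centers (W ∆ {s(b, c), s(b, a)})) : W = {s(a, c), s(a, b)} := by
  have hacW : s(a, c) ∈ W := (hcotrans hW).resolve_right fun h => by grind [ha _ h]
  have hbcW : s(b, c) ∉ W := fun h => by grind [ha _ h]
  have hc₂ : c₂ = c := by grind [h₂ (s(a, c)) (by grind), h₂ (s(b, c)) (by grind)]
  subst c₂
  ext z
  induction z using Sym2.ind with | _ x y => ?_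
  refine ⟨fun hz => ?_, fun hz => by grind⟩
  by_cases hF : s(x, y) ∈ ({s(b, c), s(b, a)} : Set _)
  · grind
  · grind [ha _ hz, h₂ _ (Set.mem_symmDiff.2 (Or.inl ⟨hz, hF⟩))]

lemma eq_empty_of_mk_notMem (hab : a ≠ b) (hac : a ≠ c) (hbc : b ≠ c)
    (hW : s(a, b) ∉ W) (htrans : s(a, c) ∈ W → s(c, b) ∈ W → s(a, b) ∈ W)
    (h₁ : c₁ ∈ centers (W ∆ {s(a, c), s(a, b)}))
    (h₂ : c₂ ∈ centers (W ∆ {s(b, c), s(b, a)})) : W = ∅ := by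
  have hab₁ := h₁ (s(a, b)) (by grind)
  have hab₂ := h₂ (s(a, b)) (by grind)
  have hacW : s(a, c) ∉ W := fun h => by
    have hcbW : s(c, b) ∉ W := fun h' => hW (htrans h h')
    grind [h₂ (s(a, c)) (by grind), h₂ (s(b, c)) (by grind)]
  have hc₁ : c₁ = a := by grind [h₁ (s(a, c)) (by grind)]
  have hcbW : s(c, b) ∉ W := fun h => by grind [h₁ (s(c, b)) (by grind)]
  have hc₂ : c₂ = b := by grind [h₂ (s(b, c)) (by grind)]
  subst c₁ c₂
  refine Set.eq_empty_of_forall_notMem fun z hz => ?_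
  grind [h₁ z (by grind), h₂ z (by grind), Sym2.mem_and_mem_iff hab]

lemma eq_empty_or_eq_or_eq_of_mem_centers (hab : a ≠ b) (hac : a ≠ c) (hbc : b ≠ c)
    (hcotrans : s(a, b) ∈ W → s(a, c) ∈ W ∨ s(c, b) ∈ W)
    (htrans : s(a, c) ∈ W → s(c, b) ∈ W → s(a, b) ∈ W) (he : e ∈ centers W)
    (h₁ : c₁ ∈ centers (W ∆ {s(a, c), s(a, b)}))
    (h₂ : c₂ ∈ centers (W ∆ {s(b, c), s(b, a)})) :
    W = ∅ ∨ W = {s(a, c), s(a, b)} ∨ W = {s(b, c), s(b, a)} := by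
  by_cases hW : s(a, b) ∈ W
  · rcases Sym2.mem_iff.1 (he _ hW) with rfl | rfl
    · exact Or.inr (Or.inl (eq_of_mk_mem_of_mem_centers hab hac hbc hW he hcotrans h₂))
    · refine Or.inr (Or.inr (eq_of_mk_mem_of_mem_centers hab.symm hbc hac
        (Sym2.eq_swap ▸ hW) he (fun h => ?_) h₁))
      grind [Sym2.eq_swap]
  · exact Or.inl (eq_empty_of_mk_notMem hab hac hbc hW htrans h₁ h₂)

end Centers

lemma exists_forall_mem_of_ordConnected {α ι : Type*} [LinearOrder α] [Finite α]
    {s : Finset ι} {C : ι → Set α} (hs : s.Nonempty) (hC : ∀ i ∈ s, (C i).OrdConnected)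
    (hpair : ∀ i ∈ s, ∀ j ∈ s, (C i ∩ C j).Nonempty) : ∃ d, ∀ i ∈ s, d ∈ C i := by
  obtain ⟨i₀, hi₀⟩ := hs
  have : Nonempty α := (hpair i₀ hi₀ i₀ hi₀).to_subtype.map Subtype.val
  have hmin : ∀ i ∈ s, ∃ m ∈ C i, ∀ x ∈ C i, m ≤ x := fun i hi =>
    Set.exists_min_image (C i) id (Set.toFinite _) (hpair i hi i hi).left
  choose! m hmC hmle using hmin
  obtain ⟨i₁, hi₁, hmax⟩ := s.exists_max_image m ⟨i₀, hi₀⟩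
  refine ⟨m i₁, fun j hj => ?_⟩
  obtain ⟨x, hxj, hxi₁⟩ := hpair j hj i₁ hi₁
  exact (hC j hj).out (hmC j hj) hxj ⟨hmax j hj, hmle i₁ hi₁ x hxi₁⟩

section Discord

variable {α : Type*} [LinearOrder α]

def discord (u v : Perm α) : Set (Sym2 α) :=
  Sym2.fromRel (r := fun x y => ¬ (u x < u y ↔ v x < v y)) ⟨fun x y h => by
    rcases eq_or_ne x y with rfl | hxy
    · exact h
    have := u.injective.ne hxy
    have := v.injective.ne hxy
    grind⟩

variable {u v w : Perm α} {a b c d x y z : α}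

@[simp]
lemma mk_mem_discord : s(x, y) ∈ discord u v ↔ ¬ (u x < u y ↔ v x < v y) := Iff.rfl

lemma mem_centers_discord_iff :
    c ∈ centers (discord u v) ↔ ∀ x y, x ≠ c → y ≠ c → (u x < u y ↔ v x < v y) := by
  refine ⟨fun h x y hx hy => ?_, fun h z hz => ?_⟩
  · by_contra hxy
    grind [h _ (mk_mem_discord.2 hxy)]
  · induction z using Sym2.ind with | _ x y => ?_
    by_contra hc
    exact hz (h x y (by grind) (by grind))

lemma discord_eq_symmDiff (u v : Perm α) : discord u v = discord 1 u ∆ discord 1 v := by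
  ext z
  induction z using Sym2.ind
  simp only [mk_mem_discord, Set.mem_symmDiff]
  tauto

lemma discord_self (u : Perm α) : discord u u = ∅ := by
  ext z
  induction z using Sym2.ind
  simp

lemma mem_centers_discord_mul_right (σ : Perm α) (hc : c ∈ centers (discord u v)) :
    σ⁻¹ c ∈ centers (discord (u * σ) (v * σ)) := by
  rw [mem_centers_discord_iff] at hc ⊢
  intro x y hx hy
  exact hc _ _ (fun h => hx (Perm.eq_inv_iff_eq.2 h)) (fun h => hy (Perm.eq_inv_iff_eq.2 h))

lemma mk_mem_discord_one_trans (h : x < y ∧ y < z ∨ z < y ∧ y < x)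
    (hxy : s(x, y) ∈ discord 1 u) (hyz : s(y, z) ∈ discord 1 u) : s(x, z) ∈ discord 1 u := by
  simp only [mk_mem_discord, Perm.one_apply] at *
  grind

lemma mk_mem_discord_one_or (h : x < y ∧ y < z ∨ z < y ∧ y < x)
    (hxz : s(x, z) ∈ discord 1 u) : s(x, y) ∈ discord 1 u ∨ s(y, z) ∈ discord 1 u := by
  simp only [mk_mem_discord, Perm.one_apply] at *
  have := u.injective.ne (show x ≠ y by grind)
  have := u.injective.ne (show y ≠ z by grind)
  grind

lemma ordConnected_centers_discord_one (u : Perm α) :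
    (centers (discord 1 u)).OrdConnected := by
  refine Set.ordConnected_def.2 fun x hx y hy z hz w hw => ?_
  rcases eq_or_ne x y with rfl | hxy
  · exact le_antisymm hz.2 hz.1 ▸ hx w hw
  obtain rfl : w = s(x, y) := (Sym2.mem_and_mem_iff hxy).1 ⟨hx w hw, hy w hw⟩
  by_contra hzw
  rcases mk_mem_discord_one_or (y := z) (by grind) hw with h | h
  · grind [hy _ h]
  · grind [hx _ h]

lemma between_of_discord_one_eq (hab : a ≠ b) (hac : a ≠ c) (hbc : b ≠ c)
    (hu : discord 1 u = {s(a, c), s(a, b)}) (hv : discord 1 v = {s(b, c), s(b, a)}) :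
    a < c ∧ c < b ∨ b < c ∧ c < a := by
  have hcab := @mk_mem_discord_one_trans _ _ u c a b
  have habc := @mk_mem_discord_one_trans _ _ v a b c
  rw [hu] at hcab
  rw [hv] at habc
  grind [Sym2.eq_swap]

lemma eq_of_discord_eq_empty [Finite α] (h : discord u v = ∅) : u = v := by
  have hmono : StrictMono (v * u⁻¹) := fun x y hxy => by
    have : s(u⁻¹ x, u⁻¹ y) ∉ discord u v := h ▸ Set.notMem_empty _
    simpa [hxy] using this
  exact (mul_inv_eq_one.1 (Perm.ext (congrFun hmono.eq_id))).symm

lemma eq_of_discord_one_eq [Finite α] (h : discord 1 u = discord 1 v) : u = v :=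
  eq_of_discord_eq_empty (by rw [discord_eq_symmDiff, h, symmDiff_self, Set.bot_eq_empty])

lemma eq_of_mem_centers_discord [Finite α] (hd : d ∈ centers (discord u v))
    (h : u d = v d) : u = v := by
  have hfix : ∀ y, y ≠ u d → (v * u⁻¹) y ≠ u d := fun y hy h' => hy (by
    rwa [Perm.mul_apply, h, v.apply_eq_iff_eq, Perm.inv_eq_iff_eq] at h')
  let g : {y // y ≠ u d} → {y // y ≠ u d} := fun y => ⟨(v * u⁻¹) y, hfix y y.2⟩
  have hmono : StrictMono g := fun x y hxy => by
    have hx : u⁻¹ x ≠ d := fun h' => x.2 (Perm.inv_eq_iff_eq.1 h')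
    have hy : u⁻¹ y ≠ d := fun h' => y.2 (Perm.inv_eq_iff_eq.1 h')
    have : s(u⁻¹ x, u⁻¹ y) ∉ discord u v := fun h' => by grind [hd _ h']
    simpa [g, Subtype.mk_lt_mk, hxy] using this
  refine (mul_inv_eq_one.1 (Perm.ext fun y => ?_)).symm
  rcases eq_or_ne y (u d) with rfl | hy
  · simp [← h]
  · exact congrArg Subtype.val (congrFun hmono.eq_id ⟨y, hy⟩)

end Discord

section Family

variable {α : Type*} [LinearOrder α] [Fintype α] {G : Finset (Perm α)}

lemma card_le_of_forall_mem_centers {d : α} (hd : ∀ u ∈ G, d ∈ centers (discord 1 u)) :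
    G.card ≤ Fintype.card α :=
  card_le_card_of_injOn (· d) (fun _ _ => mem_coe.2 (mem_univ _)) fun u hu w hw h =>
    eq_of_mem_centers_discord
      (discord_eq_symmDiff u w ▸ mem_centers_symmDiff (hd u hu) (hd w hw)) h

lemma card_le_of_disjoint_centers (h1 : 1 ∈ G)
    (hG : ∀ u ∈ G, ∀ v ∈ G, (centers (discord u v)).Nonempty) {u v : Perm α}
    (hu : u ∈ G) (hv : v ∈ G) (hdisj : Disjoint (centers (discord 1 u)) (centers (discord 1 v))) :
    G.card ≤ Fintype.card α := by
  obtain ⟨a, ha⟩ := hG 1 h1 u hu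
  obtain ⟨b, hb⟩ := hG 1 h1 v hv
  obtain ⟨c, hc⟩ := hG u hu v hv
  rw [discord_eq_symmDiff] at hc
  have hc' := symmDiff_comm (discord 1 u) _ ▸ hc
  have hab : a ≠ b := fun h => Set.disjoint_left.1 hdisj ha (h ▸ hb)
  have hac : a ≠ c := fun h => Set.disjoint_left.1 hdisj ha (mem_centers_of_symmDiff ha (h ▸ hc))
  have hbc : b ≠ c := fun h => Set.disjoint_right.1 hdisj hb (mem_centers_of_symmDiff hb (h ▸ hc'))
  have hE := eq_pair_of_disjoint_centers ha hb hc hdisj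
  have hF := eq_pair_of_disjoint_centers hb ha hc' hdisj.symm
  have hbetween := between_of_discord_one_eq hab hac hbc hE hF
  have hsub : G ⊆ {1, u, v} := by
    intro w hw
    obtain ⟨e, he⟩ := hG 1 h1 w hw
    obtain ⟨c₁, h₁⟩ := hG u hu w hw
    obtain ⟨c₂, h₂⟩ := hG v hv w hw
    rw [discord_eq_symmDiff, symmDiff_comm, hE] at h₁
    rw [discord_eq_symmDiff, symmDiff_comm, hF] at h₂
    rcases eq_empty_or_eq_or_eq_of_mem_centers hab hac hbc (mk_mem_discord_one_or hbetween)
      (mk_mem_discord_one_trans hbetween) he h₁ h₂ with h | h | h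
    · simp [eq_of_discord_one_eq (h.trans (discord_self 1).symm)]
    · simp [eq_of_discord_one_eq (h.trans hE.symm)]
    · simp [eq_of_discord_one_eq (h.trans hF.symm)]
  calc G.card ≤ ({1, u, v} : Finset (Perm α)).card := card_le_card hsub
    _ ≤ 3 := card_le_three
    _ = ({a, b, c} : Finset α).card := (card_eq_three.2 ⟨a, b, c, hab, hac, hbc, rfl⟩).symm
    _ ≤ Fintype.card α := card_le_univ _

theorem card_le_of_one_mem (h1 : 1 ∈ G)
    (hG : ∀ u ∈ G, ∀ v ∈ G, (centers (discord u v)).Nonempty) : G.card ≤ Fintype.card α := by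
  by_cases hcommon : ∃ d, ∀ u ∈ G, d ∈ centers (discord 1 u)
  · obtain ⟨d, hd⟩ := hcommon
    exact card_le_of_forall_mem_centers hd
  obtain ⟨u, hu, v, hv, hdisj⟩ :
      ∃ u ∈ G, ∃ v ∈ G, Disjoint (centers (discord 1 u)) (centers (discord 1 v)) := by
    by_contra! h
    exact hcommon (exists_forall_mem_of_ordConnected ⟨1, h1⟩
      (fun u _ => ordConnected_centers_discord_one u)
      fun u hu v hv => Set.not_disjoint_iff_nonempty_inter.1 (h u hu v hv))
  exact card_le_of_disjoint_centers h1 hG hu hv hdisj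

theorem card_le_of_centers_nonempty
    (hG : ∀ u ∈ G, ∀ v ∈ G, (centers (discord u v)).Nonempty) : G.card ≤ Fintype.card α := by
  rcases G.eq_empty_or_nonempty with rfl | ⟨u₀, hu₀⟩
  · simp
  rw [← card_image_of_injective G (mul_left_injective u₀⁻¹)]
  refine card_le_of_one_mem (mem_image.2 ⟨u₀, hu₀, mul_inv_cancel u₀⟩) ?_
  simp only [mem_image]
  rintro _ ⟨u, hu, rfl⟩ _ ⟨v, hv, rfl⟩
  obtain ⟨c, hc⟩ := hG u hu v hv
  exact ⟨_, mem_centers_discord_mul_right u₀⁻¹ hc⟩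

end Family

section Ulam

variable {n : ℕ}

lemma mem_ulamDel {σ : Perm (Fin n)} {A : Finset (Fin n)} {x : Fin n} :
    x ∈ ulamDel σ A ↔ x ∉ A := by
  simpa [ulamDel, List.mem_ofFn] using fun _ => σ.surjective x

lemma pairwise_ulamDel (σ : Perm (Fin n)) (A : Finset (Fin n)) :
    (ulamDel σ A).Pairwise (fun x y => σ⁻¹ x < σ⁻¹ y) :=
  (List.pairwise_ofFn.2 fun i j hij => by simpa using hij).filter _

lemma ulamDel_eq_iff {β γ : Perm (Fin n)} {A : Finset (Fin n)} :
    ulamDel β A = ulamDel γ A ↔ ∀ x ∉ A, ∀ y ∉ A, (β⁻¹ x < β⁻¹ y ↔ γ⁻¹ x < γ⁻¹ y) := by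
  constructor
  · intro h x hx y hy
    rcases eq_or_ne x y with rfl | hxy
    · simp
    let r : Fin n → Fin n → Prop := fun x y => β⁻¹ x < β⁻¹ y ∧ γ⁻¹ x < γ⁻¹ y
    have : Std.Symm fun x y => r x y ∨ r y x := ⟨fun _ _ => Or.symm⟩
    have hpw : (ulamDel β A).Pairwise fun x y => r x y ∨ r y x :=
      ((pairwise_ulamDel β A).and (h ▸ pairwise_ulamDel γ A)).imp Or.inl
    have := hpw.forall (mem_ulamDel.2 hx) (mem_ulamDel.2 hy) hxy
    grind
  · intro h
    have : Std.Irrefl fun x y => β⁻¹ x < β⁻¹ y := ⟨fun _ => lt_irrefl _⟩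
    have : Std.Antisymm fun x y => β⁻¹ x < β⁻¹ y := ⟨fun _ _ h h' => absurd h' h.not_gt⟩
    refine List.Pairwise.eq_of_mem_iff (pairwise_ulamDel β A)
      ((pairwise_ulamDel γ A).imp_of_mem fun hx hy hxy => ?_) fun x => by simp [mem_ulamDel]
    exact (h _ (mem_ulamDel.1 hx) _ (mem_ulamDel.1 hy)).2 hxy

lemma ulamDist_le_one_iff [NeZero n] {β γ : Perm (Fin n)} :
    ulamDist β γ ≤ 1 ↔ (centers (discord β⁻¹ γ⁻¹)).Nonempty := by
  refine ⟨fun h => ?_, fun ⟨c, hc⟩ => ?_⟩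
  · obtain ⟨A, hA, hβγ⟩ := Nat.sInf_mem (⟨_, univ, rfl, by simp [ulamDel]⟩ :
      {m | ∃ A : Finset (Fin n), A.card = m ∧ ulamDel β A = ulamDel γ A}.Nonempty)
    obtain ⟨c, hc⟩ := card_le_one_iff_subset_singleton.1 (hA.trans_le h)
    refine ⟨c, mem_centers_discord_iff.2 fun x y hx hy => ulamDel_eq_iff.1 hβγ x ?_ y ?_⟩
    · exact fun hxA => hx (mem_singleton.1 (hc hxA))
    · exact fun hyA => hy (mem_singleton.1 (hc hyA))
  · refine Nat.sInf_le ⟨{c}, card_singleton c, ulamDel_eq_iff.2 fun x hx y hy => ?_⟩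
    exact mem_centers_discord_iff.1 hc x y (by simpa using hx) (by simpa using hy)

lemma card_le_of_ulamDist_le_one [NeZero n] {F : Finset (Perm (Fin n))}
    (hF : ∀ β ∈ F, ∀ γ ∈ F, ulamDist β γ ≤ 1) : F.card ≤ n := by
  have hG : ∀ u ∈ F.image (·⁻¹), ∀ v ∈ F.image (·⁻¹), (centers (discord u v)).Nonempty := by
    simp only [mem_image]
    rintro _ ⟨β, hβ, rfl⟩ _ ⟨γ, hγ, rfl⟩
    exact ulamDist_le_one_iff.1 (hF β hβ γ hγ)
  calc F.card = (F.image (·⁻¹)).card := (card_image_of_injective F inv_injective).symm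
    _ ≤ Fintype.card (Fin n) := card_le_of_centers_nonempty hG
    _ = n := Fintype.card_fin n

lemma exists_card_eq_of_ulamDist_le_one [NeZero n] :
    ∃ F : Finset (Perm (Fin n)), (∀ β ∈ F, ∀ γ ∈ F, ulamDist β γ ≤ 1) ∧ F.card = n := by
  obtain ⟨m, rfl⟩ := Nat.exists_eq_add_one_of_ne_zero (NeZero.ne n)
  have h0 : ∀ p : Fin (m + 1), 0 ∈ centers (discord 1 p.cycleRange⁻¹) := fun p =>
    mem_centers_discord_iff.2 fun x y hx hy => by
      obtain ⟨x, rfl⟩ := Fin.exists_succ_eq.2 hx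
      obtain ⟨y, rfl⟩ := Fin.exists_succ_eq.2 hy
      simp [Perm.inv_def]
  refine ⟨univ.image Fin.cycleRange, ?_, ?_⟩
  · simp only [mem_image]
    rintro _ ⟨p, -, rfl⟩ _ ⟨q, -, rfl⟩
    refine ulamDist_le_one_iff.2 ⟨0, ?_⟩
    rw [discord_eq_symmDiff]
    exact mem_centers_symmDiff (h0 p) (h0 q)
  · rw [card_image_of_injective _ fun p q h => by
      simpa using congrArg (fun σ : Perm (Fin (m + 1)) => σ.symm 0) h]
    simp

end Ulam

/-- For each `n ≥ 1`, `f_1(n) = n`: any family `F ⊆ S_n` with pairwise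
Ulam distances at most `1` has `|F| ≤ n`, and some such family of size `n` exists. -/
theorem maxDiamFamily_one (n : ℕ) (hn : 1 ≤ n) :
    maxDiamFamily n 1 = n ∧
      (∀ F : Finset (Equiv.Perm (Fin n)),
          (∀ α ∈ F, ∀ β ∈ F, ulamDist α β ≤ 1) → F.card ≤ n) ∧
      (∃ F : Finset (Equiv.Perm (Fin n)),
          (∀ α ∈ F, ∀ β ∈ F, ulamDist α β ≤ 1) ∧ F.card = n) := by
  have : NeZero n := ⟨by omega⟩
  obtain ⟨F₀, hF₀, hcard⟩ := exists_card_eq_of_ulamDist_le_one (n := n)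
  have hle : ∀ m ∈ {m | ∃ F : Finset (Equiv.Perm (Fin n)), F.card = m ∧
      ∀ α ∈ F, ∀ β ∈ F, ulamDist α β ≤ 1}, m ≤ n := by
    rintro m ⟨F, rfl, hF⟩
    exact card_le_of_ulamDist_le_one hF
  refine ⟨le_antisymm (csSup_le ⟨n, F₀, hcard, hF₀⟩ hle) (le_csSup ⟨n, hle⟩ ⟨F₀, hcard, hF₀⟩),
    fun F hF => card_le_of_ulamDist_le_one hF, F₀, hF₀, hcard⟩
end
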